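/- Let f₁, f₂ : ℝ → ℝ be C² and h > 0. Define the four successive Euler steps with step size √h: x₁ = x₀ + √h f₁(x₀), x₂ = x₁ + √h f₂(x₁), x₃ = x₂ − √h f₁(x₂), x₄ = x₃ − √h f₂(x₃). Then there exist constants K, h̄ > 0 (depending on bounds of f₁, f₂ and their first and second derivatives on a compact neighborhood of x₀) such that for all h ∈ (0, h̄): |x₄ − x₀ − h(f₁(x₀)f₂′(x₀) − f₂(x₀)f₁′(x₀) − f₁(x₀)f₁′(x₀) − f₂(x₀)f₂′(x₀))| ≤ K h^{3/2}. -/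

import Mathlib

/-!
Put `s = √h`. Every Euler step moves the point by `O(s)`, so the first-order Taylor expansions
of `f₁` and `f₂` at `x₀`, whose remainders are `O(s²)` because the fields are `C²`, give
`x₄ - x₀ = s² (f₁ f₂' - f₂ f₁' - f₁ f₁' - f₂ f₂')(x₀) + O(s³)` as `s → 0`. Substituting `s = √h`
and unfolding the Big-O bound on a right neighbourhood of `0` yields `K` and `h'`.
-/

open Filter Topology Asymptotics

theorem ContDiff.isBigO_sub_sub_deriv_mul {f : ℝ → ℝ} (hf : ContDiff ℝ 2 f) (x₀ : ℝ) :
    (fun x => f x - f x₀ - deriv f x₀ * (x - x₀)) =O[𝓝 x₀] fun x => (x - x₀) ^ 2 := by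
  have htaylor : ∀ x, taylorWithinEval f 2 Set.univ x₀ x =
      f x₀ + deriv f x₀ * (x - x₀) + iteratedDeriv 2 f x₀ / 2 * (x - x₀) ^ 2 := by
    intro x
    simp only [taylorWithinEval_succ, taylor_within_zero_eval, CharP.cast_eq_zero, zero_add,
      Nat.factorial_zero, Nat.cast_one, mul_one, inv_one, pow_one, one_mul,
      iteratedDerivWithin_univ, iteratedDeriv_one, smul_eq_mul, Nat.factorial_one, Nat.reduceAdd]
    ring
  refine ((taylor_isLittleO_univ hf).isBigO.add
    ((isBigO_refl (fun x => (x - x₀) ^ 2) _).const_mul_left (iteratedDeriv 2 f x₀ / 2))).congr_left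
    fun x => ?_
  rw [htaylor]
  ring

section Substitution

variable {α : Type*} {l : Filter α} {u φ : α → ℝ} {x₀ : ℝ}

lemma tendsto_of_isBigO_sub (hu : (fun t => u t - x₀) =O[l] φ) (hφ : Tendsto φ l (𝓝 0)) :
    Tendsto u l (𝓝 x₀) :=
  tendsto_sub_nhds_zero_iff.mp (hu.trans_tendsto hφ)

lemma DifferentiableAt.isBigO_comp_sub {g : ℝ → ℝ} (hg : DifferentiableAt ℝ g x₀)
    (hu : (fun t => u t - x₀) =O[l] φ) (hφ : Tendsto φ l (𝓝 0)) :
    (fun t => g (u t) - g x₀) =O[l] φ :=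
  (hg.isBigO_sub.comp_tendsto (tendsto_of_isBigO_sub hu hφ)).trans hu

lemma ContDiff.isBigO_comp_sub_sub_deriv_mul {g : ℝ → ℝ} (hg : ContDiff ℝ 2 g)
    (hu : (fun t => u t - x₀) =O[l] φ) (hφ : Tendsto φ l (𝓝 0)) :
    (fun t => g (u t) - g x₀ - deriv g x₀ * (u t - x₀)) =O[l] fun t => φ t ^ 2 :=
  ((hg.isBigO_sub_sub_deriv_mul x₀).comp_tendsto (tendsto_of_isBigO_sub hu hφ)).trans (hu.pow 2)

lemma ContinuousAt.isBigO_add_mul_comp_sub {g : ℝ → ℝ} (hg : ContinuousAt g x₀) (c : ℝ)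
    (hu : (fun t => u t - x₀) =O[l] φ) (hφ : Tendsto φ l (𝓝 0)) :
    (fun t => u t + c * φ t * g (u t) - x₀) =O[l] φ := by
  have hbdd : (fun t => g (u t)) =O[l] (fun _ => (1 : ℝ)) :=
    (hg.tendsto.comp (tendsto_of_isBigO_sub hu hφ)).isBigO_one ℝ
  have hstep : (fun t => c * φ t * g (u t)) =O[l] φ := by
    simpa using ((isBigO_refl φ l).const_mul_left c).mul hbdd
  exact (hu.add hstep).congr_left fun t => by ring

end Substitution

/-- `E_{-f₂}^s ∘ E_{-f₁}^s ∘ E_{f₂}^s ∘ E_{f₁}^s` applied to `x₀`, where `E_g^s x = x + s g(x)`. -/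
def eulerLoop (f₁ f₂ : ℝ → ℝ) (s x₀ : ℝ) : ℝ :=
  let x₁ := x₀ + s * f₁ x₀
  let x₂ := x₁ + s * f₂ x₁
  let x₃ := x₂ - s * f₁ x₂
  x₃ - s * f₂ x₃

theorem eulerLoop_sub_sub_isBigO {f₁ f₂ : ℝ → ℝ} (hf₁ : ContDiff ℝ 2 f₁) (hf₂ : ContDiff ℝ 2 f₂)
    (x₀ : ℝ) :
    (fun s => eulerLoop f₁ f₂ s x₀ - x₀ - s ^ 2 * (f₁ x₀ * deriv f₂ x₀ - f₂ x₀ * deriv f₁ x₀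
      - f₁ x₀ * deriv f₁ x₀ - f₂ x₀ * deriv f₂ x₀)) =O[𝓝 0] fun s => s ^ 3 := by
  set x₁ : ℝ → ℝ := fun s => x₀ + s * f₁ x₀ with hx₁
  set x₂ : ℝ → ℝ := fun s => x₁ s + s * f₂ (x₁ s) with hx₂
  set x₃ : ℝ → ℝ := fun s => x₂ s - s * f₁ (x₂ s) with hx₃
  have hs : Tendsto (fun s : ℝ => s) (𝓝 0) (𝓝 0) := tendsto_id
  have h₁ : (fun s => x₁ s - x₀) =O[𝓝 0] fun s => s :=
    ((isBigO_refl _ _).const_mul_left (f₁ x₀)).congr_left fun s => by ring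
  have h₂ : (fun s => x₂ s - x₀) =O[𝓝 0] fun s => s := by
    simpa using hf₂.continuous.continuousAt.isBigO_add_mul_comp_sub 1 h₁ hs
  have h₃ : (fun s => x₃ s - x₀) =O[𝓝 0] fun s => s := by
    simpa [← sub_eq_add_neg] using hf₁.continuous.continuousAt.isBigO_add_mul_comp_sub (-1) h₂ hs
  have hE₁ := hf₂.isBigO_comp_sub_sub_deriv_mul h₁ hs
  have hE₂ := hf₁.isBigO_comp_sub_sub_deriv_mul h₂ hs
  have hE₃ := hf₂.isBigO_comp_sub_sub_deriv_mul h₃ hs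
  have hD₁ := (hf₂.differentiable two_ne_zero x₀).isBigO_comp_sub h₁ hs
  have hD₂ := (hf₁.differentiable two_ne_zero x₀).isBigO_comp_sub h₂ hs
  have hcorr := ((isBigO_refl (fun s : ℝ => s) _).mul
    (((hD₂.sub hD₁).const_mul_left (deriv f₂ x₀)).sub
      (hD₁.const_mul_left (deriv f₁ x₀)))).congr_right fun s => (sq s).symm
  -- `x₄ - x₀ - s² C = s (E₁ - E₂ - E₃ + s (f₂'(x₀) (D₂ - D₁) - f₁'(x₀) D₁))`, with `Eᵢ` the
  -- Taylor remainders of `hEᵢ` and `Dᵢ` the field increments of `hDᵢ`.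
  have hG := ((hE₁.sub hE₂).sub hE₃).add hcorr
  refine ((isBigO_refl (fun s : ℝ => s) _).mul hG).congr' ?_ ?_
  · exact Eventually.of_forall fun s => by simp only [eulerLoop, hx₁, hx₂, hx₃]; ring
  · exact Eventually.of_forall fun s => by ring

lemma Asymptotics.IsBigO.exists_pos_bound_of_nhdsGT {E F : Type*} [SeminormedAddCommGroup E]
    [SeminormedAddCommGroup F] {f : ℝ → E} {g : ℝ → F} {a : ℝ} (h : f =O[𝓝[>] a] g) :
    ∃ K u, 0 < K ∧ a < u ∧ ∀ x ∈ Set.Ioo a u, ‖f x‖ ≤ K * ‖g x‖ := by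
  obtain ⟨K, hK, hfg⟩ := h.exists_pos
  obtain ⟨u, hu, hsub⟩ := mem_nhdsGT_iff_exists_Ioo_subset.mp hfg.bound
  exact ⟨K, u, hK, hu, hsub⟩

theorem stmt_3 (f₁ f₂ : ℝ → ℝ) (hf₁ : ContDiff ℝ 2 f₁) (hf₂ : ContDiff ℝ 2 f₂) (x₀ : ℝ) :
    ∃ K h' : ℝ, 0 < K ∧ 0 < h' ∧ ∀ h : ℝ, 0 < h → h < h' →
      let s := Real.sqrt h
      let x₁ := x₀ + s * f₁ x₀
      let x₂ := x₁ + s * f₂ x₁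
      let x₃ := x₂ - s * f₁ x₂
      let x₄ := x₃ - s * f₂ x₃
      |x₄ - x₀ - h * (f₁ x₀ * deriv f₂ x₀ - f₂ x₀ * deriv f₁ x₀
          - f₁ x₀ * deriv f₁ x₀ - f₂ x₀ * deriv f₂ x₀)| ≤ K * h ^ ((3:ℝ)/2) := by
  have hsqrt : Tendsto Real.sqrt (𝓝[>] 0) (𝓝 0) :=
    (Real.continuous_sqrt.tendsto' 0 0 Real.sqrt_zero).mono_left nhdsWithin_le_nhds
  obtain ⟨K, h', hK, hh', hbound⟩ :=
    ((eulerLoop_sub_sub_isBigO hf₁ hf₂ x₀).comp_tendsto hsqrt).exists_pos_bound_of_nhdsGT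
  refine ⟨K, h', hK, hh', fun h h0 hlt => ?_⟩
  have hpow : Real.sqrt h ^ 3 = h ^ ((3:ℝ)/2) := by
    rw [Real.rpow_div_two_eq_sqrt 3 h0.le]
    norm_cast
  simpa [Real.sq_sqrt h0.le, hpow, abs_of_nonneg (Real.rpow_nonneg h0.le _), eulerLoop] using
    hbound h ⟨h0, hlt⟩
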